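/- arXiv:2410.02909 — 7 statements merged into one kernel-verified Lean document; each statement's English description precedes it below -/
import Mathlib

section
/- Let E, F, Z be normed spaces, U ⊆ E open, and f : U × Z → F a C¹ map such that f(y,·) is linear for each y ∈ U. Then the map f^∨ : U → L(Z,F), y ↦ f(y,·), is continuous with respect to the operator norm on L(Z,F). -/
/-!
The curried map `y ↦ f(y,·)` is the partial derivative of `f` in the second variable: a
continuous linear map is its own derivative, so `f(y,·) = D f(y,0) ∘ inr`. Since `f` is C¹,
`y ↦ D f(y,0)` is continuous for the operator norm, and so is its composition with `inr`.
-/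

open Set ContinuousLinearMap

section

variable {𝕜 E F Z : Type*} [NontriviallyNormedField 𝕜]
  [NormedAddCommGroup E] [NormedSpace 𝕜 E]
  [NormedAddCommGroup F] [NormedSpace 𝕜 F]
  [NormedAddCommGroup Z] [NormedSpace 𝕜 Z]

theorem fderiv_comp_inr_eq_of_apply_eq {Φ : E × Z → F} {L : Z →L[𝕜] F} {y : E}
    (hΦ : ∀ z, Φ (y, z) = L z) {z : Z} (hd : DifferentiableAt 𝕜 Φ (y, z)) :
    (fderiv 𝕜 Φ (y, z)).comp (inr 𝕜 E Z) = L := by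
  have hslice : HasFDerivAt (fun z => Φ (y, z)) ((fderiv 𝕜 Φ (y, z)).comp (inr 𝕜 E Z)) z :=
    hd.hasFDerivAt.comp z (hasFDerivAt_prodMk_right y z)
  have hL : HasFDerivAt (fun z => Φ (y, z)) L z := by
    simpa only [hΦ] using L.hasFDerivAt
  exact hslice.unique hL

theorem ContDiffOn.continuousOn_fderiv_comp_inr {Φ : E × Z → F} {U : Set E} {V : Set Z}
    (hΦ : ContDiffOn 𝕜 1 Φ (U ×ˢ V)) (hU : IsOpen U) (hV : IsOpen V) {z : Z} (hz : z ∈ V) :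
    ContinuousOn (fun y => (fderiv 𝕜 Φ (y, z)).comp (inr 𝕜 E Z)) U := by
  have hD : ContinuousOn (fderiv 𝕜 Φ) (U ×ˢ V) :=
    hΦ.continuousOn_fderiv_of_isOpen (hU.prod hV) le_rfl
  have hslice : ContinuousOn (fun y => fderiv 𝕜 Φ (y, z)) U :=
    hD.comp (Continuous.prodMk_left z).continuousOn fun y hy => ⟨hy, hz⟩
  exact hslice.clm_comp continuousOn_const

end

/-- If `f : U × Z → F` is C¹ and `f(y,·)` is continuous linear for each `y ∈ U`,
then `f^∨ : U → L(Z,F)`, `y ↦ f(y,·)`, is continuous for the operator norm. -/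
theorem continuousOn_of_contDiffOn_one
    {E F Z : Type*} [NormedAddCommGroup E] [NormedSpace ℝ E]
    [NormedAddCommGroup F] [NormedSpace ℝ F]
    [NormedAddCommGroup Z] [NormedSpace ℝ Z]
    (U : Set E) (hU : IsOpen U) (f : E → Z → F)
    (hf : ContDiffOn ℝ 1 (fun p : E × Z => f p.1 p.2) (U ×ˢ (univ : Set Z)))
    (g : E → Z →L[ℝ] F) (hg : ∀ y ∈ U, ∀ z : Z, g y z = f y z) :
    ContinuousOn g U := by
  refine (hf.continuousOn_fderiv_comp_inr hU isOpen_univ (mem_univ 0)).congr fun y hy => ?_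
  have hd : DifferentiableAt ℝ (fun p : E × Z => f p.1 p.2) (y, 0) :=
    (hf.differentiableOn one_ne_zero).differentiableAt
      ((hU.prod isOpen_univ).mem_nhds ⟨hy, mem_univ 0⟩)
  exact (fderiv_comp_inr_eq_of_apply_eq (fun z => (hg y hy z).symm) hd).symm
end

section
/- Let E, Z be Banach spaces, y₀ ∈ E, R > 0, and f : B̄_R(y₀) × Z → E a continuous map such that f(y,·) is linear for each y and ‖f(y₂,z) − f(y₁,z)‖ ≤ L‖y₂ − y₁‖‖z‖ for all y₁, y₂ ∈ B̄_R(y₀), z ∈ Z. Let a < b and γ : [a,b] → Z be integrable. Then the ODE y'(t) = f(y(t), γ(t)) has local uniqueness of Carathéodory solutions: any two absolutely continuous solutions with the same value at a point t₀ agree on a neighbourhood of t₀. -/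
/-!
The difference `D = η₁ - η₂` satisfies `D t = ∫_{t₀}^t H` with `‖H s‖ ≤ L ‖γ s‖ ‖D s‖`.
Choose `ε` so small that `∫_{t₀}^t L ‖γ‖ ≤ 1/2` whenever `|t - t₀| ≤ ε`, and let `M` be the maximum
of `‖D‖` on that window: then `M ≤ M / 2`, so `M = 0`.
-/

open Set MeasureTheory

/-- A Carathéodory solution of `y'(t) = f(y(t), γ(t))` on `[a,b]`, anchored at `t₀`:
a continuous curve which is the indefinite integral of the (integrable) right-hand side,
i.e. an absolutely continuous curve solving the ODE almost everywhere. -/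
def IsCaraSol {X Z : Type*} [NormedAddCommGroup X] [NormedSpace ℝ X]
    (f : X → Z → X) (γ : ℝ → Z) (a b t₀ : ℝ) (η : ℝ → X) : Prop :=
  ContinuousOn η (Icc a b) ∧
  IntegrableOn (fun s => f (η s) (γ s)) (Icc a b) ∧
  ∀ t ∈ Icc a b, η t = η t₀ + ∫ s in t₀..t, f (η s) (γ s)

theorem exists_forall_abs_intervalIntegral_le {k : ℝ → ℝ} {a b t₀ δ : ℝ}
    (hk : IntegrableOn k (Icc a b)) (ht₀ : t₀ ∈ Icc a b) (hδ : 0 < δ) :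
    ∃ ε > 0, ∀ t ∈ Icc a b, |t - t₀| ≤ ε → |∫ s in t₀..t, k s| ≤ δ := by
  have hab : uIcc a b = Icc a b := uIcc_of_le (ht₀.1.trans ht₀.2)
  have hcont : ContinuousWithinAt (fun t => ∫ s in t₀..t, k s) (Icc a b) t₀ := by
    rw [← hab] at hk ht₀ ⊢
    exact intervalIntegral.continuousOn_primitive_interval' hk.intervalIntegrable ht₀ t₀ ht₀
  obtain ⟨ε, hε, hsmall⟩ := Metric.continuousWithinAt_iff.1 hcont δ hδ
  refine ⟨ε / 2, half_pos hε, fun t ht hdist => ?_⟩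
  have := hsmall ht (by rw [Real.dist_eq]; linarith)
  rw [Real.dist_eq, intervalIntegral.integral_same, sub_zero] at this
  exact this.le

theorem exists_eq_zero_near_of_eq_intervalIntegral {E : Type*} [NormedAddCommGroup E]
    [NormedSpace ℝ E] {D H : ℝ → E} {k : ℝ → ℝ} {a b t₀ : ℝ} (ht₀ : t₀ ∈ Icc a b)
    (hD : ContinuousOn D (Icc a b)) (hk : IntegrableOn k (Icc a b))
    (hDH : ∀ t ∈ Icc a b, D t = ∫ s in t₀..t, H s)
    (hH : ∀ s ∈ Icc a b, ‖H s‖ ≤ k s * ‖D s‖) :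
    ∃ ε > 0, ∀ t ∈ Icc a b, |t - t₀| ≤ ε → D t = 0 := by
  obtain ⟨ε, hε, hsmall⟩ := exists_forall_abs_intervalIntegral_le hk.abs ht₀ one_half_pos
  set J := Icc a b ∩ Icc (t₀ - ε) (t₀ + ε)
  have hmemJ : ∀ t ∈ Icc a b, |t - t₀| ≤ ε → t ∈ J := fun t ht hdist =>
    ⟨ht, mem_Icc_iff_abs_le.1 (abs_sub_comm t t₀ ▸ hdist)⟩
  have ht₀J : t₀ ∈ J := hmemJ t₀ ht₀ (by simpa using hε.le)
  obtain ⟨tm, htmJ, hmax⟩ := (isCompact_Icc.inter isCompact_Icc).exists_isMaxOn ⟨t₀, ht₀J⟩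
    (hD.mono inter_subset_left).norm
  have htm : tm ∈ Icc a b ∧ |tm - t₀| ≤ ε :=
    ⟨htmJ.1, abs_sub_comm t₀ tm ▸ mem_Icc_iff_abs_le.2 htmJ.2⟩
  have hwindow : uIcc t₀ tm ⊆ J := (ordConnected_Icc.inter ordConnected_Icc).uIcc_subset ht₀J htmJ
  have hbound : ∀ s ∈ uIoc t₀ tm, ‖H s‖ ≤ ‖D tm‖ * |k s| := fun s hs => by
    have hsJ := hwindow (uIoc_subset_uIcc hs)
    calc ‖H s‖ ≤ k s * ‖D s‖ := hH s hsJ.1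
      _ ≤ |k s| * ‖D tm‖ := mul_le_mul (le_abs_self _) (hmax hsJ) (norm_nonneg _) (abs_nonneg _)
      _ = ‖D tm‖ * |k s| := mul_comm _ _
  have hhalf : ‖D tm‖ ≤ ‖D tm‖ * (1 / 2) :=
    calc ‖D tm‖ = ‖∫ s in t₀..tm, H s‖ := by rw [hDH tm htm.1]
      _ ≤ |(∫ s in t₀..tm, ‖D tm‖ * |k s|)| :=
        intervalIntegral.norm_integral_le_abs_of_norm_le
          (ae_restrict_of_forall_mem measurableSet_uIoc hbound)
          (IntegrableOn.mono_set (hk.abs.const_mul _)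
            (hwindow.trans inter_subset_left)).intervalIntegrable
      _ = ‖D tm‖ * |(∫ s in t₀..tm, |k s|)| := by
        rw [intervalIntegral.integral_const_mul, abs_mul, abs_norm]
      _ ≤ ‖D tm‖ * (1 / 2) := mul_le_mul_of_nonneg_left (hsmall tm htm.1 htm.2) (norm_nonneg _)
  refine ⟨ε, hε, fun t ht hdist => norm_le_zero_iff.1 ?_⟩
  have hle : ‖D t‖ ≤ ‖D tm‖ := hmax (hmemJ t ht hdist)
  linarith [norm_nonneg (D tm)]

theorem IsCaraSol.sub_eq_intervalIntegral {X Z : Type*} [NormedAddCommGroup X]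
    [NormedSpace ℝ X] {f : X → Z → X} {γ : ℝ → Z} {a b t₀ : ℝ} {η₁ η₂ : ℝ → X}
    (h₁ : IsCaraSol f γ a b t₀ η₁) (h₂ : IsCaraSol f γ a b t₀ η₂) (heq : η₁ t₀ = η₂ t₀)
    (ht₀ : t₀ ∈ Icc a b) :
    ∀ t ∈ Icc a b, η₁ t - η₂ t = ∫ s in t₀..t, (f (η₁ s) (γ s) - f (η₂ s) (γ s)) := by
  intro t ht
  have hsub : uIcc t₀ t ⊆ Icc a b := ordConnected_Icc.uIcc_subset ht₀ ht
  rw [intervalIntegral.integral_sub (h₁.2.1.mono_set hsub).intervalIntegrable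
    (h₂.2.1.mono_set hsub).intervalIntegrable, h₁.2.2 t ht, h₂.2.2 t ht, heq]
  abel

theorem local_uniqueness_caratheodory_general
    {E Z : Type*} [NormedAddCommGroup E] [NormedSpace ℝ E]
    [NormedAddCommGroup Z]
    (y₀ : E) (R : ℝ) (f : E → Z → E)
    (L : ℝ)
    (hLip : ∀ y₁ ∈ Metric.closedBall y₀ R, ∀ y₂ ∈ Metric.closedBall y₀ R, ∀ z : Z,
      ‖f y₂ z - f y₁ z‖ ≤ L * ‖y₂ - y₁‖ * ‖z‖)
    (a b : ℝ) (γ : ℝ → Z) (hγ : IntegrableOn γ (Icc a b))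
    (t₀ : ℝ) (ht₀ : t₀ ∈ Icc a b) (η₁ η₂ : ℝ → E)
    (hη₁ball : ∀ t ∈ Icc a b, η₁ t ∈ Metric.closedBall y₀ R)
    (hη₂ball : ∀ t ∈ Icc a b, η₂ t ∈ Metric.closedBall y₀ R)
    (hη₁ : IsCaraSol f γ a b t₀ η₁) (hη₂ : IsCaraSol f γ a b t₀ η₂)
    (heq : η₁ t₀ = η₂ t₀) :
    ∃ ε > 0, ∀ t ∈ Icc a b, |t - t₀| ≤ ε → η₁ t = η₂ t := by
  obtain ⟨ε, hε, hzero⟩ := exists_eq_zero_near_of_eq_intervalIntegral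
    (D := fun t => η₁ t - η₂ t) (k := fun s => L * ‖γ s‖)
    ht₀ (hη₁.1.sub hη₂.1) (hγ.norm.const_mul L) (hη₁.sub_eq_intervalIntegral hη₂ heq ht₀)
    fun s hs => (hLip _ (hη₂ball s hs) _ (hη₁ball s hs) _).trans_eq (by ring)
  exact ⟨ε, hε, fun t ht hdist => sub_eq_zero.1 (hzero t ht hdist)⟩

/-- Local uniqueness of Carathéodory solutions of `y' = f(y, γ(t))` for a right-hand side
which is linear in the second variable and Lipschitz in the first on a closed ball. -/
theorem local_uniqueness_caratheodory
    {E Z : Type*} [NormedAddCommGroup E] [NormedSpace ℝ E] [CompleteSpace E]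
    [NormedAddCommGroup Z] [NormedSpace ℝ Z] [CompleteSpace Z]
    (y₀ : E) (R : ℝ) (hR : 0 < R) (f : E → Z → E)
    (hf : ContinuousOn (fun p : E × Z => f p.1 p.2) (Metric.closedBall y₀ R ×ˢ (univ : Set Z)))
    (hlin : ∀ y ∈ Metric.closedBall y₀ R, IsLinearMap ℝ (f y))
    (L : ℝ) (hL : 0 ≤ L)
    (hLip : ∀ y₁ ∈ Metric.closedBall y₀ R, ∀ y₂ ∈ Metric.closedBall y₀ R, ∀ z : Z,
      ‖f y₂ z - f y₁ z‖ ≤ L * ‖y₂ - y₁‖ * ‖z‖)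
    (a b : ℝ) (hab : a < b) (γ : ℝ → Z) (hγ : IntegrableOn γ (Icc a b))
    (t₀ : ℝ) (ht₀ : t₀ ∈ Icc a b) (η₁ η₂ : ℝ → E)
    (hη₁ball : ∀ t ∈ Icc a b, η₁ t ∈ Metric.closedBall y₀ R)
    (hη₂ball : ∀ t ∈ Icc a b, η₂ t ∈ Metric.closedBall y₀ R)
    (hη₁ : IsCaraSol f γ a b t₀ η₁) (hη₂ : IsCaraSol f γ a b t₀ η₂)
    (heq : η₁ t₀ = η₂ t₀) :
    ∃ ε > 0, ∀ t ∈ Icc a b, |t - t₀| ≤ ε → η₁ t = η₂ t :=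
  local_uniqueness_caratheodory_general y₀ R f L hLip a b γ hγ t₀ ht₀ η₁ η₂ hη₁ball hη₂ball hη₁ hη₂
    heq
end

section
/- Let E, Z be Banach spaces, y₀ ∈ E, R > 0, and f : B̄_R(y₀) × Z → E continuous with f(y,·) linear for each y and satisfying the Lipschitz estimate ‖f(y₂,z) − f(y₁,z)‖ ≤ L‖y₂ − y₁‖‖z‖. Let a < b, t₀ ∈ [a,b], and γ ∈ L¹([a,b], Z) with L·‖γ‖_{L¹} < 1 and sup_{y ∈ B̄_R(y₀)} ‖f(y,·)‖_op · ‖γ‖_{L¹} ≤ R. Then the initial value problem y'(t) = f(y(t), γ(t)), y(t₀) = y₀ has a Carathéodory solution η : [a,b] → B̄_R(y₀) defined on all of [a,b]. -/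
/-! The Picard operator `Φ η (t) = y₀ + ∫_{t₀}^t f(η(s), γ(s)) ds` maps continuous curves
`[a, b] → B̄_R(y₀)` into themselves, since `‖Φ η (t) - y₀‖ ≤ S ‖γ‖_{L¹} ≤ R`, and the Lipschitz
estimate gives `‖Φ η - Φ ζ‖_∞ ≤ L ‖γ‖_{L¹} ‖η - ζ‖_∞`. So `Φ` is a contraction of a complete metric
space, and its fixed point is the solution. -/

open Set MeasureTheory

open Metric

section
variable {E Z : Type*} [NormedAddCommGroup E]

theorem norm_intervalIntegral_le_mul_integral_norm [NormedSpace ℝ E] [NormedAddCommGroup Z]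
    {g : ℝ → E} {ρ : ℝ → Z} {C a b t₀ t : ℝ} (hg : IntegrableOn g (Icc a b))
    (hρ : IntegrableOn ρ (Icc a b)) (hgρ : ∀ s ∈ Icc a b, ‖g s‖ ≤ C * ‖ρ s‖)
    (ht₀ : t₀ ∈ Icc a b) (ht : t ∈ Icc a b) :
    ‖∫ s in t₀..t, g s‖ ≤ C * ∫ s in Icc a b, ‖ρ s‖ :=
  calc ‖∫ s in t₀..t, g s‖ ≤ ∫ s in uIoc t₀ t, ‖g s‖ :=
        intervalIntegral.norm_integral_le_integral_norm_uIoc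
    _ ≤ ∫ s in Icc a b, ‖g s‖ :=
        setIntegral_mono_set hg.norm (ae_of_all _ fun _ => norm_nonneg _)
          (ae_of_all _ fun _ hs => uIcc_subset_Icc ht₀ ht (uIoc_subset_uIcc hs))
    _ ≤ ∫ s in Icc a b, C * ‖ρ s‖ :=
        setIntegral_mono_on hg.norm (hρ.norm.const_mul C) measurableSet_Icc hgρ
    _ = C * ∫ s in Icc a b, ‖ρ s‖ := integral_const_mul C _

theorem integrable_comp_of_continuousOn_of_norm_le [NormedAddCommGroup Z] {α : Type*}
    [MeasurableSpace α]
    {μ : Measure α} {f : E → Z → E} {D : Set E} {S : ℝ} {γ : α → Z} {η : α → D}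
    (hf : ContinuousOn (fun p : E × Z => f p.1 p.2) (D ×ˢ univ))
    (hS : ∀ y ∈ D, ∀ z, ‖f y z‖ ≤ S * ‖z‖) (hγ : Integrable γ μ)
    (hη : AEStronglyMeasurable η μ) :
    Integrable (fun x => f (η x) (γ x)) μ := by
  have hf' : Continuous fun p : D × Z => f p.1 p.2 :=
    hf.comp_continuous (continuous_subtype_val.prodMap continuous_id) fun p => ⟨p.1.2, mem_univ _⟩
  exact (hγ.norm.const_mul S).mono' (hf'.comp_aestronglyMeasurable (hη.prodMk hγ.1))
    (ae_of_all _ fun x => hS _ (η x).2 _)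

variable [NormedSpace ℝ E]

noncomputable def picard (f : E → Z → E) (γ : ℝ → Z) (t₀ : ℝ) (y₀ : E) (η : ℝ → E) (t : ℝ) : E :=
  y₀ + ∫ s in t₀..t, f (η s) (γ s)

variable {f : E → Z → E} {γ : ℝ → Z} {y₀ : E} {η ζ : ℝ → E} {C a b t₀ t : ℝ}

@[simp]
theorem picard_self : picard f γ t₀ y₀ η t₀ = y₀ := by
  simp [picard]

theorem continuousOn_picard (hη : IntegrableOn (fun s => f (η s) (γ s)) (Icc a b))
    (ht₀ : t₀ ∈ Icc a b) : ContinuousOn (picard f γ t₀ y₀ η) (Icc a b) := by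
  have hIcc : uIcc a b = Icc a b := uIcc_of_le (ht₀.1.trans ht₀.2)
  have hprim := intervalIntegral.continuousOn_primitive_interval'
    (hη.mono_set hIcc.subset).intervalIntegrable (hIcc ▸ ht₀)
  rw [hIcc] at hprim
  exact continuousOn_const.add hprim

variable [NormedAddCommGroup Z]

theorem dist_picard_le (hη : IntegrableOn (fun s => f (η s) (γ s)) (Icc a b))
    (hγ : IntegrableOn γ (Icc a b)) (hC : ∀ s ∈ Icc a b, ‖f (η s) (γ s)‖ ≤ C * ‖γ s‖)
    (ht₀ : t₀ ∈ Icc a b) (ht : t ∈ Icc a b) :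
    dist (picard f γ t₀ y₀ η t) y₀ ≤ C * ∫ s in Icc a b, ‖γ s‖ := by
  rw [picard, dist_self_add_left]
  exact norm_intervalIntegral_le_mul_integral_norm hη hγ hC ht₀ ht

theorem dist_picard_picard_le (hη : IntegrableOn (fun s => f (η s) (γ s)) (Icc a b))
    (hζ : IntegrableOn (fun s => f (ζ s) (γ s)) (Icc a b)) (hγ : IntegrableOn γ (Icc a b))
    (hC : ∀ s ∈ Icc a b, ‖f (η s) (γ s) - f (ζ s) (γ s)‖ ≤ C * ‖γ s‖)
    (ht₀ : t₀ ∈ Icc a b) (ht : t ∈ Icc a b) :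
    dist (picard f γ t₀ y₀ η t) (picard f γ t₀ y₀ ζ t) ≤ C * ∫ s in Icc a b, ‖γ s‖ := by
  have hsub := uIcc_subset_Icc ht₀ ht
  rw [picard, picard, dist_add_left, dist_eq_norm, ← intervalIntegral.integral_sub
    (hη.mono_set hsub).intervalIntegrable (hζ.mono_set hsub).intervalIntegrable]
  exact norm_intervalIntegral_le_mul_integral_norm (hη.sub hζ) hγ hC ht₀ ht

theorem exists_continuous_eq_picard [CompleteSpace E] {R S L : ℝ} (hR : 0 ≤ R) (hL : 0 ≤ L)
    (hf : ContinuousOn (fun p : E × Z => f p.1 p.2) (closedBall y₀ R ×ˢ univ))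
    (hLip : ∀ y₁ ∈ closedBall y₀ R, ∀ y₂ ∈ closedBall y₀ R, ∀ z : Z,
      ‖f y₂ z - f y₁ z‖ ≤ L * ‖y₂ - y₁‖ * ‖z‖)
    (hS : ∀ y ∈ closedBall y₀ R, ∀ z : Z, ‖f y z‖ ≤ S * ‖z‖) (hγ : IntegrableOn γ (Icc a b))
    (hsmall : L * ∫ s in Icc a b, ‖γ s‖ < 1) (hSR : S * ∫ s in Icc a b, ‖γ s‖ ≤ R)
    (ht₀ : t₀ ∈ Icc a b) :
    ∃ η : ℝ → closedBall y₀ R, Continuous η ∧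
      ∀ t ∈ Icc a b, (η t : E) = picard f γ t₀ y₀ (fun s => η s) t := by
  have hab : a ≤ b := ht₀.1.trans ht₀.2
  have : CompleteSpace (closedBall y₀ R) := isClosed_closedBall.completeSpace_coe
  have : Nonempty C(Icc a b, closedBall y₀ R) :=
    ⟨.const _ ⟨y₀, mem_closedBall_self hR⟩⟩
  let curve (u : C(Icc a b, closedBall y₀ R)) : ℝ → closedBall y₀ R := IccExtend hab u
  have hcurve (u) : Continuous (curve u) := continuous_IccExtend_iff.2 u.continuous
  have hint (u) : IntegrableOn (fun s => f (curve u s) (γ s)) (Icc a b) :=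
    integrable_comp_of_continuousOn_of_norm_le hf hS hγ (hcurve u).aestronglyMeasurable
  let Φ (u : C(Icc a b, closedBall y₀ R)) : C(Icc a b, closedBall y₀ R) :=
    ⟨fun t => ⟨picard f γ t₀ y₀ (fun s => curve u s) t,
      (dist_picard_le (hint u) hγ (fun s _ => hS _ (curve u s).2 _) ht₀ t.2).trans hSR⟩,
     (continuousOn_picard (hint u) ht₀).domRestrict.subtype_mk _⟩
  have hΦ : ContractingWith (L * ∫ s in Icc a b, ‖γ s‖).toNNReal Φ := by
    refine ⟨Real.toNNReal_lt_one.2 hsmall, LipschitzWith.of_dist_le' fun u v => ?_⟩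
    refine (ContinuousMap.dist_le (by positivity)).2 fun t => ?_
    refine (dist_picard_picard_le (C := L * dist u v) (hint u) (hint v) hγ (fun s _ => ?_) ht₀
      t.2).trans_eq (by ring)
    calc ‖f (curve u s) (γ s) - f (curve v s) (γ s)‖
        ≤ L * ‖(curve u s : E) - curve v s‖ * ‖γ s‖ := hLip _ (curve v s).2 _ (curve u s).2 _
      _ ≤ L * dist u v * ‖γ s‖ := by
        gcongr
        rw [← dist_eq_norm, ← Subtype.dist_eq]
        exact ContinuousMap.dist_apply_le_dist _
  refine ⟨curve (hΦ.fixedPoint Φ), hcurve _, fun t ht => ?_⟩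
  conv_lhs => rw [show curve _ t = _ from IccExtend_of_mem hab _ ht, ← hΦ.fixedPoint_isFixedPt]
  rfl

end

theorem global_existence_caratheodory_general
    {E Z : Type*} [NormedAddCommGroup E] [NormedSpace ℝ E] [CompleteSpace E]
    [NormedAddCommGroup Z]
    (y₀ : E) (R : ℝ) (hR : 0 < R) (f : E → Z → E)
    (hf : ContinuousOn (fun p : E × Z => f p.1 p.2) (Metric.closedBall y₀ R ×ˢ (univ : Set Z)))
    (L : ℝ) (hL : 0 ≤ L)
    (hLip : ∀ y₁ ∈ Metric.closedBall y₀ R, ∀ y₂ ∈ Metric.closedBall y₀ R, ∀ z : Z,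
      ‖f y₂ z - f y₁ z‖ ≤ L * ‖y₂ - y₁‖ * ‖z‖)
    (S : ℝ) (hS : ∀ y ∈ Metric.closedBall y₀ R, ∀ z : Z, ‖f y z‖ ≤ S * ‖z‖)
    (a b : ℝ) (γ : ℝ → Z) (hγ : IntegrableOn γ (Icc a b))
    (hsmall : L * ∫ s in Icc a b, ‖γ s‖ < 1)
    (hSR : S * ∫ s in Icc a b, ‖γ s‖ ≤ R)
    (t₀ : ℝ) (ht₀ : t₀ ∈ Icc a b) :
    ∃ η : ℝ → E, (∀ t ∈ Icc a b, η t ∈ Metric.closedBall y₀ R) ∧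
      IsCaraSol f γ a b t₀ η ∧ η t₀ = y₀ := by
  obtain ⟨η, hη_cont, hη⟩ :=
    exists_continuous_eq_picard hR.le hL hf hLip hS hγ hsmall hSR ht₀
  have hη₀ : (η t₀ : E) = y₀ := by rw [hη t₀ ht₀, picard_self]
  refine ⟨fun t => η t, fun t _ => (η t).2, ⟨hη_cont.subtype_val.continuousOn,
    integrable_comp_of_continuousOn_of_norm_le hf hS hγ hη_cont.aestronglyMeasurable,
    fun t ht => ?_⟩, hη₀⟩
  show (η t : E) = η t₀ + ∫ s in t₀..t, f (η s) (γ s)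
  rw [hη₀]
  exact hη t ht

/-- Quantitative Carathéodory existence: if `L‖γ‖_{L¹} < 1` and `S‖γ‖_{L¹} ≤ R`
(where `S` bounds the operator norms `‖f(y,·)‖`), then the initial value problem
`y' = f(y, γ(t))`, `y(t₀) = y₀` has a Carathéodory solution on all of `[a,b]`
with values in the closed ball of radius `R` about `y₀`. -/
theorem global_existence_caratheodory
    {E Z : Type*} [NormedAddCommGroup E] [NormedSpace ℝ E] [CompleteSpace E]
    [NormedAddCommGroup Z] [NormedSpace ℝ Z] [CompleteSpace Z]
    (y₀ : E) (R : ℝ) (hR : 0 < R) (f : E → Z → E)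
    (hf : ContinuousOn (fun p : E × Z => f p.1 p.2) (Metric.closedBall y₀ R ×ˢ (univ : Set Z)))
    (hlin : ∀ y ∈ Metric.closedBall y₀ R, IsLinearMap ℝ (f y))
    (L : ℝ) (hL : 0 ≤ L)
    (hLip : ∀ y₁ ∈ Metric.closedBall y₀ R, ∀ y₂ ∈ Metric.closedBall y₀ R, ∀ z : Z,
      ‖f y₂ z - f y₁ z‖ ≤ L * ‖y₂ - y₁‖ * ‖z‖)
    (S : ℝ) (hS : ∀ y ∈ Metric.closedBall y₀ R, ∀ z : Z, ‖f y z‖ ≤ S * ‖z‖)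
    (a b : ℝ) (hab : a < b) (γ : ℝ → Z) (hγ : IntegrableOn γ (Icc a b))
    (hsmall : L * ∫ s in Icc a b, ‖γ s‖ < 1)
    (hSR : S * ∫ s in Icc a b, ‖γ s‖ ≤ R)
    (t₀ : ℝ) (ht₀ : t₀ ∈ Icc a b) :
    ∃ η : ℝ → E, (∀ t ∈ Icc a b, η t ∈ Metric.closedBall y₀ R) ∧
      IsCaraSol f γ a b t₀ η ∧ η t₀ = y₀ :=
  global_existence_caratheodory_general y₀ R hR f hf L hL hLip S hS a b γ hγ hsmall hSR t₀ ht₀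
end

section
/- Let E, Z be Banach spaces, f : B̄_R(y₀) × Z → E continuous, linear in the second variable, and Lipschitz in the first variable in the sense ‖f(y₂,z)−f(y₁,z)‖ ≤ L‖y₂−y₁‖‖z‖, with L‖γ‖_{L¹} < 1 and S‖γ‖_{L¹} ≤ R where S = sup ‖f(y,·)‖_op. Then the Carathéodory solution of y' = f(y,γ(t)), y(t₀) = y₀ with values in B̄_R(y₀) is unique (it is the unique fixed point of the Picard operator on X). -/
/-!
The difference of two solutions with the same initial value is the integral of
`f (η₁ s) (γ s) - f (η₂ s) (γ s)`, so by the Lipschitz bound its norm is at most `L‖γ‖_{L¹}` times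
the maximum of `‖η₁ - η₂‖` on the compact interval `[a,b]`. Applied at the point where that
maximum is attained, `L‖γ‖_{L¹} < 1` forces the maximum to vanish.
-/

open Set MeasureTheory

theorem norm_intervalIntegral_le_setIntegral_Icc {E : Type*} [NormedAddCommGroup E]
    [NormedSpace ℝ E] {g : ℝ → E} {a b t₀ t : ℝ} (hg : IntegrableOn g (Icc a b))
    (ht₀ : t₀ ∈ Icc a b) (ht : t ∈ Icc a b) :
    ‖∫ s in t₀..t, g s‖ ≤ ∫ s in Icc a b, ‖g s‖ :=
  calc ‖∫ s in t₀..t, g s‖ ≤ ∫ s in uIoc t₀ t, ‖g s‖ :=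
        intervalIntegral.norm_integral_le_integral_norm_uIoc
    _ ≤ ∫ s in Icc a b, ‖g s‖ :=
        setIntegral_mono_set hg.norm (.of_forall fun _ => norm_nonneg _)
          (Ioc_subset_Icc_self.trans (uIcc_subset_Icc ht₀ ht)).eventuallyLE

namespace IsCaraSol

variable {E Z : Type*} [NormedAddCommGroup E] [NormedSpace ℝ E]
  {f : E → Z → E} {γ : ℝ → Z} {a b t₀ : ℝ} {η₁ η₂ : ℝ → E}

theorem sub_eq_intervalIntegral_s6 (hη₁ : IsCaraSol f γ a b t₀ η₁)
    (hη₂ : IsCaraSol f γ a b t₀ η₂) (h₀ : η₁ t₀ = η₂ t₀) (ht₀ : t₀ ∈ Icc a b)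
    {t : ℝ} (ht : t ∈ Icc a b) :
    η₁ t - η₂ t = ∫ s in t₀..t, (f (η₁ s) (γ s) - f (η₂ s) (γ s)) := by
  have hsub : uIoc t₀ t ⊆ Icc a b := Ioc_subset_Icc_self.trans (uIcc_subset_Icc ht₀ ht)
  rw [hη₁.2.2 t ht, hη₂.2.2 t ht, h₀, intervalIntegral.integral_sub
    (intervalIntegrable_iff.mpr (hη₁.2.1.mono_set hsub))
    (intervalIntegrable_iff.mpr (hη₂.2.1.mono_set hsub))]
  abel

theorem norm_sub_le_mul_of_lipschitz [NormedAddCommGroup Z] {D : Set E} {L M : ℝ}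
    (hL : 0 ≤ L)
    (hLip : ∀ y₁ ∈ D, ∀ y₂ ∈ D, ∀ z : Z, ‖f y₂ z - f y₁ z‖ ≤ L * ‖y₂ - y₁‖ * ‖z‖)
    (hγ : IntegrableOn γ (Icc a b)) (hη₁ : IsCaraSol f γ a b t₀ η₁)
    (hη₂ : IsCaraSol f γ a b t₀ η₂) (hη₁D : MapsTo η₁ (Icc a b) D)
    (hη₂D : MapsTo η₂ (Icc a b) D) (h₀ : η₁ t₀ = η₂ t₀) (ht₀ : t₀ ∈ Icc a b)
    (hM : ∀ s ∈ Icc a b, ‖η₁ s - η₂ s‖ ≤ M) {t : ℝ} (ht : t ∈ Icc a b) :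
    ‖η₁ t - η₂ t‖ ≤ L * (∫ s in Icc a b, ‖γ s‖) * M := by
  have hg : IntegrableOn (fun s => f (η₁ s) (γ s) - f (η₂ s) (γ s)) (Icc a b) :=
    hη₁.2.1.sub hη₂.2.1
  have hpointwise : ∀ s ∈ Icc a b,
      ‖f (η₁ s) (γ s) - f (η₂ s) (γ s)‖ ≤ L * M * ‖γ s‖ := fun s hs =>
    (hLip _ (hη₂D hs) _ (hη₁D hs) (γ s)).trans <|
      mul_le_mul_of_nonneg_right (mul_le_mul_of_nonneg_left (hM s hs) hL) (norm_nonneg _)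
  rw [hη₁.sub_eq_intervalIntegral_s6 hη₂ h₀ ht₀ ht]
  calc _ ≤ ∫ s in Icc a b, ‖f (η₁ s) (γ s) - f (η₂ s) (γ s)‖ :=
        norm_intervalIntegral_le_setIntegral_Icc hg ht₀ ht
    _ ≤ ∫ s in Icc a b, L * M * ‖γ s‖ :=
        setIntegral_mono_on hg.norm (hγ.norm.const_mul _) measurableSet_Icc hpointwise
    _ = L * (∫ s in Icc a b, ‖γ s‖) * M := by rw [integral_const_mul]; ring

end IsCaraSol

theorem uniqueness_caratheodory_ball_general
    {E Z : Type*} [NormedAddCommGroup E] [NormedSpace ℝ E]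
    [NormedAddCommGroup Z]
    (y₀ : E) (R : ℝ) (f : E → Z → E)
    (L : ℝ) (hL : 0 ≤ L)
    (hLip : ∀ y₁ ∈ Metric.closedBall y₀ R, ∀ y₂ ∈ Metric.closedBall y₀ R, ∀ z : Z,
      ‖f y₂ z - f y₁ z‖ ≤ L * ‖y₂ - y₁‖ * ‖z‖)
    (a b : ℝ) (t₀ : ℝ) (ht₀ : t₀ ∈ Icc a b)
    (γ : ℝ → Z) (hγ : IntegrableOn γ (Icc a b))
    (hsmall : L * ∫ s in Icc a b, ‖γ s‖ < 1)
    (η₁ η₂ : ℝ → E)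
    (hη₁ball : ∀ t ∈ Icc a b, η₁ t ∈ Metric.closedBall y₀ R)
    (hη₂ball : ∀ t ∈ Icc a b, η₂ t ∈ Metric.closedBall y₀ R)
    (hη₁ : IsCaraSol f γ a b t₀ η₁) (hη₂ : IsCaraSol f γ a b t₀ η₂)
    (hη₁0 : η₁ t₀ = y₀) (hη₂0 : η₂ t₀ = y₀) :
    EqOn η₁ η₂ (Icc a b) := by
  obtain ⟨t₁, ht₁, hmax⟩ := isCompact_Icc.exists_isMaxOn ⟨t₀, ht₀⟩ (hη₁.1.sub hη₂.1).norm
  have hbound := hη₁.norm_sub_le_mul_of_lipschitz (M := ‖η₁ t₁ - η₂ t₁‖) hL hLip hγ hη₂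
    hη₁ball hη₂ball (hη₁0.trans hη₂0.symm) ht₀ (fun s hs => hmax hs) ht₁
  have hmax_nonpos : ‖η₁ t₁ - η₂ t₁‖ ≤ 0 := by
    nlinarith [norm_nonneg (η₁ t₁ - η₂ t₁)]
  intro t ht
  exact sub_eq_zero.mp (norm_le_zero_iff.mp ((hmax ht).trans hmax_nonpos))

/-- Under the smallness conditions `L‖γ‖_{L¹} < 1` and `S‖γ‖_{L¹} ≤ R`, the
Carathéodory solution of `y' = f(y,γ(t))`, `y(t₀) = y₀` with values in `B̄_R(y₀)` is
unique (it is the unique fixed point of the Picard operator on `X`). -/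
theorem uniqueness_caratheodory_ball
    {E Z : Type*} [NormedAddCommGroup E] [NormedSpace ℝ E] [CompleteSpace E]
    [NormedAddCommGroup Z] [NormedSpace ℝ Z] [CompleteSpace Z]
    (y₀ : E) (R : ℝ) (hR : 0 < R) (f : E → Z → E)
    (hf : ContinuousOn (fun p : E × Z => f p.1 p.2) (Metric.closedBall y₀ R ×ˢ (univ : Set Z)))
    (hlin : ∀ y ∈ Metric.closedBall y₀ R, IsLinearMap ℝ (f y))
    (L : ℝ) (hL : 0 ≤ L)
    (hLip : ∀ y₁ ∈ Metric.closedBall y₀ R, ∀ y₂ ∈ Metric.closedBall y₀ R, ∀ z : Z,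
      ‖f y₂ z - f y₁ z‖ ≤ L * ‖y₂ - y₁‖ * ‖z‖)
    (S : ℝ) (hS : ∀ y ∈ Metric.closedBall y₀ R, ∀ z : Z, ‖f y z‖ ≤ S * ‖z‖)
    (a b : ℝ) (hab : a < b) (t₀ : ℝ) (ht₀ : t₀ ∈ Icc a b)
    (γ : ℝ → Z) (hγ : IntegrableOn γ (Icc a b))
    (hsmall : L * ∫ s in Icc a b, ‖γ s‖ < 1)
    (hSR : S * ∫ s in Icc a b, ‖γ s‖ ≤ R)
    (η₁ η₂ : ℝ → E)
    (hη₁ball : ∀ t ∈ Icc a b, η₁ t ∈ Metric.closedBall y₀ R)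
    (hη₂ball : ∀ t ∈ Icc a b, η₂ t ∈ Metric.closedBall y₀ R)
    (hη₁ : IsCaraSol f γ a b t₀ η₁) (hη₂ : IsCaraSol f γ a b t₀ η₂)
    (hη₁0 : η₁ t₀ = y₀) (hη₂0 : η₂ t₀ = y₀) :
    EqOn η₁ η₂ (Icc a b) :=
  uniqueness_caratheodory_ball_general y₀ R f L hL hLip a b t₀ ht₀ γ hγ hsmall η₁ η₂ hη₁ball hη₂ball
    hη₁ hη₂ hη₁0 hη₂0
end

section
/- Let E, F be Banach spaces, φ : U → V a C¹ diffeomorphism between open subsets U ⊆ E, V ⊆ F, Z a Banach space, and f : U × Z → E, g : V × Z → F maps with g(φ(x), z) = Dφ(x)(f(x,z)) for all x ∈ U, z ∈ Z. Let γ ∈ L¹([a,b],Z). Then η : [a,b] → U is a Carathéodory solution of η'(t) = f(η(t),γ(t)) if and only if φ ∘ η is a Carathéodory solution of x'(t) = g(x(t), γ(t)). -/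
/-!
For the forward direction, write `η t = η a + ∫ₐᵗ v` with `v s = f (η s) (γ s)`. The curve `η` is
absolutely continuous, `φ` is Lipschitz on the compact set `η '' [a, b] ⊆ U`, so
`t ↦ φ (η t) - ∫ₐᵗ φ' (η s) (v s)` is absolutely continuous; by Lebesgue differentiation and the
chain rule its derivative vanishes almost everywhere, so it is constant. The backward direction is
the forward one for `ψ`, since `Dψ (φ x) ∘ φ' x = id` turns the relation `g ∘ φ = φ' f` into
`f ∘ ψ = Dψ g`.
-/

open Set MeasureTheory

open Filter Topology

namespace AbsolutelyContinuousOnInterval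

variable {X Y : Type*} [PseudoMetricSpace X] [PseudoMetricSpace Y] {f : ℝ → X} {g : ℝ → Y}
  {a b : ℝ}

theorem of_dist_le_mul (hg : AbsolutelyContinuousOnInterval g a b) (K : ℝ)
    (h : ∀ x ∈ uIcc a b, ∀ y ∈ uIcc a b, dist (f x) (f y) ≤ K * dist (g x) (g y)) :
    AbsolutelyContinuousOnInterval f a b := by
  unfold AbsolutelyContinuousOnInterval at hg ⊢
  have hKg := hg.const_mul K
  rw [mul_zero] at hKg
  refine squeeze_zero' (.of_forall fun E ↦ Finset.sum_nonneg fun _ _ ↦ dist_nonneg) ?_ hKg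
  filter_upwards [eventually_inf_principal.mpr (.of_forall fun _ ↦ id)] with E hE
  rw [Finset.mul_sum]
  exact Finset.sum_le_sum fun i hi ↦ h _ (hE.1 i hi).1 _ (hE.1 i hi).2

end AbsolutelyContinuousOnInterval

theorem LipschitzOnWith.comp_absolutelyContinuousOnInterval {X Y : Type*} [PseudoMetricSpace X]
    [PseudoMetricSpace Y] {φ : X → Y} {K : NNReal} {s : Set X} {f : ℝ → X} {a b : ℝ}
    (hφ : LipschitzOnWith K φ s) (hf : AbsolutelyContinuousOnInterval f a b)
    (hfs : MapsTo f (uIcc a b) s) : AbsolutelyContinuousOnInterval (φ ∘ f) a b :=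
  hf.of_dist_le_mul K fun _ hx _ hy ↦ hφ.dist_le_mul _ (hfs hx) _ (hfs hy)

theorem absolutelyContinuousOnInterval_of_eq_add_intervalIntegral {E : Type*}
    [NormedAddCommGroup E] [NormedSpace ℝ E] {η v : ℝ → E} {a b : ℝ} (c : E)
    (hv : IntervalIntegrable v volume a b) (hη : ∀ t ∈ uIcc a b, η t = c + ∫ s in a..t, v s) :
    AbsolutelyContinuousOnInterval η a b := by
  refine (hv.norm.absolutelyContinuousOnInterval_intervalIntegral left_mem_uIcc).of_dist_le_mul 1
    fun x hx y hy ↦ ?_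
  have hvI {x y : ℝ} (hx : x ∈ uIcc a b) (hy : y ∈ uIcc a b) : IntervalIntegrable v volume x y :=
    hv.mono_set (uIcc_subset_uIcc hx hy)
  rw [one_mul, hη x hx, hη y hy, dist_add_left, dist_eq_norm, Real.dist_eq,
    intervalIntegral.integral_interval_sub_left (hvI left_mem_uIcc hx) (hvI left_mem_uIcc hy),
    intervalIntegral.integral_interval_sub_left (hvI left_mem_uIcc hx).norm
      (hvI left_mem_uIcc hy).norm]
  exact intervalIntegral.norm_integral_le_abs_integral_norm

theorem ContDiffOn.exists_lipschitzOnWith_of_isOpen {𝕂 : Type*} [RCLike 𝕂] {E F : Type*}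
    [NormedAddCommGroup E] [NormedSpace 𝕂 E] [NormedAddCommGroup F] [NormedSpace 𝕂 F]
    {φ : E → F} {U K : Set E} (hφ : ContDiffOn 𝕂 1 φ U) (hU : IsOpen U) (hK : IsCompact K)
    (hKU : K ⊆ U) : ∃ C, LipschitzOnWith C φ K := by
  refine LocallyLipschitzOn.exists_lipschitzOnWith_of_compact hK fun x hx ↦ ?_
  obtain ⟨C, t, ht, hC⟩ := (hφ.contDiffAt (hU.mem_nhds (hKU hx))).exists_lipschitzOnWith
  exact ⟨C, t, mem_nhdsWithin_of_mem_nhds ht, hC⟩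

theorem ae_hasDerivAt_of_eq_add_intervalIntegral {E : Type*} [NormedAddCommGroup E]
    [NormedSpace ℝ E] [CompleteSpace E] {η v : ℝ → E} {a b : ℝ} (c : E)
    (hv : IntervalIntegrable v volume a b) (hη : ∀ t ∈ Icc a b, η t = c + ∫ s in a..t, v s) :
    ∀ᵐ t, t ∈ Icc a b → HasDerivAt η (v t) t := by
  have hne_a : ∀ᵐ t : ℝ, t ≠ a := by simp [ae_iff, measure_singleton]
  have hne_b : ∀ᵐ t : ℝ, t ≠ b := by simp [ae_iff, measure_singleton]
  filter_upwards [hv.ae_hasDerivAt_integral, hne_a, hne_b] with t ht hta htb htI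
  have htIoo : t ∈ Ioo a b := ⟨htI.1.lt_of_ne' hta, htI.2.lt_of_ne htb⟩
  refine ((ht (Icc_subset_uIcc htI) a left_mem_uIcc).const_add c).congr_of_eventuallyEq ?_
  filter_upwards [Ioo_mem_nhds htIoo.1 htIoo.2] with s hs using hη s (Ioo_subset_Icc_self hs)

theorem MeasureTheory.IntegrableOn.continuousOn_clm_apply {X 𝕜 E F : Type*} [TopologicalSpace X]
    [MeasurableSpace X] [OpensMeasurableSpace X] [NontriviallyNormedField 𝕜]
    [NormedAddCommGroup E] [NormedSpace 𝕜 E] [NormedAddCommGroup F] [NormedSpace 𝕜 F]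
    [SecondCountableTopologyEither X (E →L[𝕜] F)] {μ : Measure X} {K : Set X}
    {A : X → E →L[𝕜] F} {v : X → E} (hv : IntegrableOn v K μ) (hA : ContinuousOn A K)
    (hK : IsCompact K) (hKm : MeasurableSet K) : IntegrableOn (fun x ↦ A x (v x)) K μ := by
  obtain ⟨C, hC⟩ := hK.exists_bound_of_continuousOn hA
  refine Integrable.mono' (hv.norm.const_mul C) ?_ ?_
  · exact isBoundedBilinearMap_apply.continuous.comp_aestronglyMeasurable
      ((hA.aestronglyMeasurable hKm).prodMk hv.aestronglyMeasurable)
  · filter_upwards [ae_restrict_mem hKm] with x hx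
    exact (A x).le_of_opNorm_le (hC x hx) (v x)

theorem ContDiffOn.continuousOn_of_hasFDerivAt {𝕜 E F : Type*} [NontriviallyNormedField 𝕜]
    [NormedAddCommGroup E] [NormedSpace 𝕜 E] [NormedAddCommGroup F] [NormedSpace 𝕜 F]
    {φ : E → F} {φ' : E → E →L[𝕜] F} {U : Set E} (hφ : ContDiffOn 𝕜 1 φ U) (hU : IsOpen U)
    (hφ' : ∀ x ∈ U, HasFDerivAt φ (φ' x) x) : ContinuousOn φ' U :=
  (hφ.continuousOn_fderiv_of_isOpen hU le_rfl).congr fun x hx ↦ (hφ' x hx).fderiv.symm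

theorem ContDiffOn.comp_eq_add_intervalIntegral_of_eq_add_intervalIntegral {E F : Type*}
    [NormedAddCommGroup E] [NormedSpace ℝ E] [CompleteSpace E]
    [NormedAddCommGroup F] [NormedSpace ℝ F] [CompleteSpace F]
    {φ : E → F} {φ' : E → E →L[ℝ] F} {U : Set E} {η v : ℝ → E} {a b : ℝ}
    (hφ : ContDiffOn ℝ 1 φ U) (hU : IsOpen U) (hφ' : ∀ x ∈ U, HasFDerivAt φ (φ' x) x)
    (hab : a ≤ b) (hv : IntegrableOn v (Icc a b))
    (hη : ∀ t ∈ Icc a b, η t = η a + ∫ s in a..t, v s) (hηU : MapsTo η (Icc a b) U) :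
    ∀ t ∈ Icc a b, φ (η t) = φ (η a) + ∫ s in a..t, φ' (η s) (v s) := by
  have hvI : IntervalIntegrable v volume a b :=
    (intervalIntegrable_iff_integrableOn_Icc_of_le hab).2 hv
  have hηAC : AbsolutelyContinuousOnInterval η a b :=
    absolutelyContinuousOnInterval_of_eq_add_intervalIntegral (η a) hvI (uIcc_of_le hab ▸ hη)
  have hηc : ContinuousOn η (Icc a b) := uIcc_of_le hab ▸ hηAC.continuousOn
  set w := fun s ↦ φ' (η s) (v s)
  have hwI : IntervalIntegrable w volume a b :=
    (intervalIntegrable_iff_integrableOn_Icc_of_le hab).2 <| hv.continuousOn_clm_apply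
      ((hφ.continuousOn_of_hasFDerivAt hU hφ').comp hηc hηU) isCompact_Icc measurableSet_Icc
  have hw : ∀ t ∈ Icc a b, ∫ s in a..t, w s = 0 + ∫ s in a..t, w s := fun _ _ ↦ (zero_add _).symm
  obtain ⟨C, hC⟩ := hφ.exists_lipschitzOnWith_of_isOpen hU
    (isCompact_Icc.image_of_continuousOn hηc) (image_subset_iff.2 hηU)
  have hAC : AbsolutelyContinuousOnInterval (fun t ↦ φ (η t) - ∫ s in a..t, w s) a b :=
    (hC.comp_absolutelyContinuousOnInterval hηAC (uIcc_of_le hab ▸ mapsTo_image η _)).sub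
      (absolutelyContinuousOnInterval_of_eq_add_intervalIntegral 0 hwI (uIcc_of_le hab ▸ hw))
  have hderiv : ∀ᵐ t, t ∈ uIcc a b → HasDerivAt (fun t ↦ φ (η t) - ∫ s in a..t, w s) 0 t := by
    rw [uIcc_of_le hab]
    filter_upwards [ae_hasDerivAt_of_eq_add_intervalIntegral _ hvI hη,
      ae_hasDerivAt_of_eq_add_intervalIntegral _ hwI hw] with t hηt hwt ht
    convert ((hφ' _ (hηU ht)).comp_hasDerivAt t (hηt ht)).sub (hwt ht) using 1
    exacts [rfl, (sub_self (w t)).symm]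
  obtain ⟨D, hD⟩ := hAC.const_of_ae_hasDerivAt_zero hderiv
  intro t ht
  rw [uIcc_of_le hab] at hD
  rw [sub_eq_iff_eq_add.mp (hD t ht), ← hD a (left_mem_Icc.2 hab), intervalIntegral.integral_same,
    sub_zero]

theorem HasFDerivAt.comp_eq_id_of_eventually_leftInverse {𝕜 E F : Type*}
    [NontriviallyNormedField 𝕜] [NormedAddCommGroup E] [NormedSpace 𝕜 E]
    [NormedAddCommGroup F] [NormedSpace 𝕜 F] {φ : E → F} {ψ : F → E} {φ' : E →L[𝕜] F}
    {ψ' : F →L[𝕜] E} {x : E} (hφ : HasFDerivAt φ φ' x) (hψ : HasFDerivAt ψ ψ' (φ x))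
    (hinv : ∀ᶠ y in 𝓝 x, ψ (φ y) = y) : ψ'.comp φ' = ContinuousLinearMap.id 𝕜 E :=
  (hψ.comp x hφ).unique ((hasFDerivAt_id x).congr_of_eventuallyEq hinv)

namespace IsCaraSol

variable {X Z : Type*} [NormedAddCommGroup X] [NormedSpace ℝ X] {f : X → Z → X} {γ : ℝ → Z}
  {a b t₀ : ℝ} {η : ℝ → X}

theorem congr {η' : ℝ → X} (h : IsCaraSol f γ a b t₀ η) (ht₀ : t₀ ∈ Icc a b)
    (heq : EqOn η η' (Icc a b)) : IsCaraSol f γ a b t₀ η' := by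
  obtain ⟨hc, hi, hs⟩ := h
  refine ⟨hc.congr heq.symm, hi.congr_fun (fun s hs ↦ by rw [← heq hs]) measurableSet_Icc,
    fun t ht ↦ ?_⟩
  rw [← heq ht, ← heq ht₀, hs t ht]
  congr 1
  exact intervalIntegral.integral_congr fun s hs ↦ by rw [heq (uIcc_subset_Icc ht₀ ht hs)]

theorem comp {F : Type*} [NormedAddCommGroup F] [NormedSpace ℝ F] [CompleteSpace X]
    [CompleteSpace F] {g : F → Z → F} {φ : X → F} {φ' : X → X →L[ℝ] F} {U : Set X}
    (h : IsCaraSol f γ a b a η) (hφ : ContDiffOn ℝ 1 φ U) (hU : IsOpen U)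
    (hφ' : ∀ x ∈ U, HasFDerivAt φ (φ' x) x) (hrel : ∀ x ∈ U, ∀ z, g (φ x) z = φ' x (f x z))
    (hab : a ≤ b) (hηU : MapsTo η (Icc a b) U) : IsCaraSol g γ a b a (φ ∘ η) := by
  obtain ⟨hηc, hfi, hη⟩ := h
  have hrel' : EqOn (fun s ↦ φ' (η s) (f (η s) (γ s))) (fun s ↦ g (φ (η s)) (γ s)) (Icc a b) :=
    fun s hs ↦ (hrel _ (hηU hs) _).symm
  refine ⟨hφ.continuousOn.comp hηc hηU, ?_, fun t ht ↦ ?_⟩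
  · exact (hfi.continuousOn_clm_apply ((hφ.continuousOn_of_hasFDerivAt hU hφ').comp hηc hηU)
      isCompact_Icc measurableSet_Icc).congr_fun hrel' measurableSet_Icc
  · rw [Function.comp_apply, Function.comp_apply,
      hφ.comp_eq_add_intervalIntegral_of_eq_add_intervalIntegral hU hφ' hab hfi hη hηU t ht]
    congr 1
    exact intervalIntegral.integral_congr fun s hs ↦
      hrel' (uIcc_subset_Icc (left_mem_Icc.2 hab) ht hs)

end IsCaraSol

theorem caratheodory_sol_diffeo_related_general
    {E F Z : Type*} [NormedAddCommGroup E] [NormedSpace ℝ E] [CompleteSpace E]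
    [NormedAddCommGroup F] [NormedSpace ℝ F] [CompleteSpace F]
    (U : Set E) (hU : IsOpen U) (V : Set F) (hV : IsOpen V)
    (φ : E → F) (ψ : F → E) (hφ : ContDiffOn ℝ 1 φ U) (hψ : ContDiffOn ℝ 1 ψ V)
    (hφV : MapsTo φ U V) (hψU : MapsTo ψ V U)
    (hinv₁ : ∀ x ∈ U, ψ (φ x) = x) (hinv₂ : ∀ y ∈ V, φ (ψ y) = y)
    (φ' : E → E →L[ℝ] F) (hφ' : ∀ x ∈ U, HasFDerivAt φ (φ' x) x)
    (f : E → Z → E) (g : F → Z → F)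
    (hrel : ∀ x ∈ U, ∀ z : Z, g (φ x) z = φ' x (f x z))
    (a b : ℝ) (hab : a < b) (γ : ℝ → Z)
    (η : ℝ → E) (hηU : ∀ t ∈ Icc a b, η t ∈ U) :
    IsCaraSol f γ a b a η ↔ IsCaraSol g γ a b a (φ ∘ η) := by
  refine ⟨fun h ↦ h.comp hφ hU hφ' hrel hab.le hηU, fun h ↦ ?_⟩
  have hψ' : ∀ y ∈ V, HasFDerivAt ψ (fderiv ℝ ψ y) y := fun y hy ↦
    ((hψ.contDiffAt (hV.mem_nhds hy)).differentiableAt one_ne_zero).hasFDerivAt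
  have hrelψ : ∀ y ∈ V, ∀ z, f (ψ y) z = fderiv ℝ ψ y (g y z) := by
    intro y hy z
    have hid : (fderiv ℝ ψ y).comp (φ' (ψ y)) = ContinuousLinearMap.id ℝ E :=
      (hφ' _ (hψU hy)).comp_eq_id_of_eventually_leftInverse ((hinv₂ y hy).symm ▸ hψ' y hy)
        (eventually_of_mem (hU.mem_nhds (hψU hy)) hinv₁)
    rw [← hinv₂ y hy, hrel _ (hψU hy), ← ContinuousLinearMap.comp_apply, hinv₂ y hy, hid]
    rfl
  exact (h.comp hψ hV hψ' hrelψ hab.le fun t ht ↦ hφV (hηU t ht)).congr (left_mem_Icc.2 hab.le)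
    fun t ht ↦ hinv₁ _ (hηU t ht)

/-- Transport of Carathéodory solutions under a C¹ diffeomorphism relating the two
vector fields: `η` solves `η' = f(η, γ(t))` iff `φ ∘ η` solves `x' = g(x, γ(t))`,
where `g(φ(x), z) = Dφ(x)(f(x,z))`. -/
theorem caratheodory_sol_diffeo_related
    {E F Z : Type*} [NormedAddCommGroup E] [NormedSpace ℝ E] [CompleteSpace E]
    [NormedAddCommGroup F] [NormedSpace ℝ F] [CompleteSpace F]
    [NormedAddCommGroup Z] [NormedSpace ℝ Z] [CompleteSpace Z]
    (U : Set E) (hU : IsOpen U) (V : Set F) (hV : IsOpen V)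
    (φ : E → F) (ψ : F → E) (hφ : ContDiffOn ℝ 1 φ U) (hψ : ContDiffOn ℝ 1 ψ V)
    (hφV : MapsTo φ U V) (hψU : MapsTo ψ V U)
    (hinv₁ : ∀ x ∈ U, ψ (φ x) = x) (hinv₂ : ∀ y ∈ V, φ (ψ y) = y)
    (φ' : E → E →L[ℝ] F) (hφ' : ∀ x ∈ U, HasFDerivAt φ (φ' x) x)
    (f : E → Z → E) (g : F → Z → F)
    (hfc : ContinuousOn (fun p : E × Z => f p.1 p.2) (U ×ˢ (univ : Set Z)))
    (hgc : ContinuousOn (fun p : F × Z => g p.1 p.2) (V ×ˢ (univ : Set Z)))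
    (hflin : ∀ x ∈ U, IsLinearMap ℝ (f x)) (hglin : ∀ y ∈ V, IsLinearMap ℝ (g y))
    (hrel : ∀ x ∈ U, ∀ z : Z, g (φ x) z = φ' x (f x z))
    (a b : ℝ) (hab : a < b) (γ : ℝ → Z) (hγ : IntegrableOn γ (Icc a b))
    (η : ℝ → E) (hηU : ∀ t ∈ Icc a b, η t ∈ U) :
    IsCaraSol f γ a b a η ↔ IsCaraSol g γ a b a (φ ∘ η) :=
  caratheodory_sol_diffeo_related_general U hU V hV φ ψ hφ hψ hφV hψU hinv₁ hinv₂ φ' hφ' f g hrel a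
    b hab γ η hηU
end

section
/- Let (E_n) be a sequence of Banach spaces with continuous linear inclusions E_{n+1} ↪ E_n, and E = ⋂_n E_n with the projective limit topology. Let a < b. A curve η : [a,b] → E is absolutely continuous (i.e., η(t) = η(a) + ∫_a^t γ(s) ds for some γ ∈ L¹([a,b],E)) if and only if λ_n ∘ η : [a,b] → E_n is absolutely continuous for every n, where λ_n : E → E_n is the inclusion. -/
/-!
The density of an absolutely continuous curve is unique almost everywhere, by the Lebesgue
differentiation theorem. Hence, if each component `λₙ ∘ η` has a density `γₙ`, then `ι ∘ γₙ₊₁`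
is a second density of `λₙ ∘ η = ι ∘ λₙ₊₁ ∘ η`, so `ι (γₙ₊₁ s) = γₙ s` for almost every `s`,
simultaneously for all `n` since there are countably many. At such `s` the sequence `(γₙ s)ₙ`
is a point of the projective limit, which gives the density of `η`.
-/

open Set MeasureTheory

/-- The projective limit `E = ⋂ₙ Eₙ` of a sequence of Banach spaces with continuous
linear inclusion maps `Eₙ₊₁ → Eₙ`, realized as compatible sequences in `Π n, Eₙ`. -/
def projLim (Eb : ℕ → Type*) [∀ n, NormedAddCommGroup (Eb n)] [∀ n, NormedSpace ℝ (Eb n)]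
    (ι : ∀ n, Eb (n + 1) →L[ℝ] Eb n) : Submodule ℝ (∀ n, Eb n) where
  carrier := {x | ∀ n, ι n (x (n + 1)) = x n}
  add_mem' := by intro x y hx hy n; simp [hx n, hy n]
  zero_mem' := by intro n; simp
  smul_mem' := by intro c x hx n; simp [hx n]

theorem MeasureTheory.IntegrableOn.intervalIntegrable_of_mem_Icc {E : Type*} [NormedAddCommGroup E]
    {f : ℝ → E} {a b t : ℝ} (hf : IntegrableOn f (Icc a b)) (ht : t ∈ Icc a b) :
    IntervalIntegrable f volume a t :=
  (intervalIntegrable_iff_integrableOn_Icc_of_le ht.1).2 (hf.mono_set (Icc_subset_Icc_right ht.2))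

theorem ae_eq_of_forall_intervalIntegral_eq {E : Type*} [NormedAddCommGroup E]
    [NormedSpace ℝ E] [CompleteSpace E] {f g : ℝ → E} {a b : ℝ}
    (hf : IntegrableOn f (Icc a b)) (hg : IntegrableOn g (Icc a b))
    (h : ∀ t ∈ Icc a b, ∫ s in a..t, f s = ∫ s in a..t, g s) :
    ∀ᵐ x, x ∈ Icc a b → f x = g x := by
  rcases lt_or_ge b a with hba | hab
  · simp [Icc_eq_empty_of_lt hba]
  have hb : b ∈ Icc a b := right_mem_Icc.2 hab
  have ha : a ∈ uIcc a b := left_mem_uIcc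
  filter_upwards [(hf.intervalIntegrable_of_mem_Icc hb).ae_hasDerivAt_integral,
    (hg.intervalIntegrable_of_mem_Icc hb).ae_hasDerivAt_integral,
    Measure.ae_ne volume a, Measure.ae_ne volume b] with x hfx hgx hxa hxb hx
  have hx' : x ∈ Ioo a b := ⟨lt_of_le_of_ne hx.1 hxa.symm, lt_of_le_of_ne hx.2 hxb⟩
  have hprim : (fun t => ∫ s in a..t, f s) =ᶠ[nhds x] fun t => ∫ s in a..t, g s :=
    Filter.eventually_of_mem (Ioo_mem_nhds hx'.1 hx'.2) fun t ht => h t (Ioo_subset_Icc_self ht)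
  exact (hfx (Icc_subset_uIcc hx) a ha).unique
    ((hgx (Icc_subset_uIcc hx) a ha).congr_of_eventuallyEq hprim)

section ProjLim

variable {Eb : ℕ → Type*} [∀ n, NormedAddCommGroup (Eb n)] [∀ n, NormedSpace ℝ (Eb n)]
  {ι : ∀ n, Eb (n + 1) →L[ℝ] Eb n}

theorem exists_projLim_eq_of_compatible {α : Type*} (γn : ∀ n, α → Eb n) :
    ∃ γ : α → projLim Eb ι, ∀ x, (∀ n, ι n (γn (n + 1) x) = γn n x) →
      ∀ n, (γ x : ∀ m, Eb m) n = γn n x := by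
  classical
  exact ⟨fun x => if hx : ∀ n, ι n (γn (n + 1) x) = γn n x then ⟨fun n => γn n x, hx⟩ else 0,
    fun x hx n => by simp [hx]⟩

theorem ae_compatible_of_forall_eq_add_intervalIntegral [∀ n, CompleteSpace (Eb n)]
    {η : ℝ → projLim Eb ι} {a b : ℝ} {n : ℕ} {γ₀ : ℝ → Eb n} {γ₁ : ℝ → Eb (n + 1)}
    (hγ₀ : IntegrableOn γ₀ (Icc a b)) (hγ₁ : IntegrableOn γ₁ (Icc a b))
    (hη₀ : ∀ t ∈ Icc a b, (η t : ∀ m, Eb m) n = (η a : ∀ m, Eb m) n + ∫ s in a..t, γ₀ s)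
    (hη₁ : ∀ t ∈ Icc a b,
      (η t : ∀ m, Eb m) (n + 1) = (η a : ∀ m, Eb m) (n + 1) + ∫ s in a..t, γ₁ s) :
    ∀ᵐ s, s ∈ Icc a b → ι n (γ₁ s) = γ₀ s := by
  refine ae_eq_of_forall_intervalIntegral_eq ((ι n).integrable_comp hγ₁) hγ₀ fun t ht => ?_
  have hι_η : ∀ s, ι n ((η s : ∀ m, Eb m) (n + 1)) = (η s : ∀ m, Eb m) n := fun s => (η s).2 n
  have := congrArg (ι n) (hη₁ t ht)
  rw [map_add, hι_η, hι_η, hη₀ t ht,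
    ← (ι n).intervalIntegral_comp_comm (hγ₁.intervalIntegrable_of_mem_Icc ht)] at this
  exact (add_left_cancel this).symm

end ProjLim

theorem absCont_into_projLim_iff_general
    (Eb : ℕ → Type*) [∀ n, NormedAddCommGroup (Eb n)] [∀ n, NormedSpace ℝ (Eb n)]
    [∀ n, CompleteSpace (Eb n)]
    (ι : ∀ n, Eb (n + 1) →L[ℝ] Eb n)
    (a b : ℝ) (η : ℝ → projLim Eb ι) :
    (∃ γ : ℝ → projLim Eb ι, ∀ n,
        IntegrableOn (fun s => ((γ s : ∀ m, Eb m) n)) (Icc a b) ∧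
        ∀ t ∈ Icc a b, ((η t : ∀ m, Eb m) n) =
          ((η a : ∀ m, Eb m) n) + ∫ s in a..t, ((γ s : ∀ m, Eb m) n)) ↔
      ∀ n, ∃ γn : ℝ → Eb n, IntegrableOn γn (Icc a b) ∧
        ∀ t ∈ Icc a b, ((η t : ∀ m, Eb m) n) =
          ((η a : ∀ m, Eb m) n) + ∫ s in a..t, γn s := by
  refine ⟨fun ⟨γ, hγ⟩ n => ⟨_, hγ n⟩, fun H => ?_⟩
  choose γn hint hrep using H
  have hcompat : ∀ᵐ s, s ∈ Icc a b → ∀ n, ι n (γn (n + 1) s) = γn n s := by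
    simpa only [ae_all_iff, imp_forall_iff] using fun n =>
      ae_compatible_of_forall_eq_add_intervalIntegral (hint n) (hint (n + 1))
        (hrep n) (hrep (n + 1))
  obtain ⟨γ, hγ⟩ := exists_projLim_eq_of_compatible (ι := ι) γn
  have hγ_ae : ∀ n, ∀ᵐ s, s ∈ Icc a b → (γ s : ∀ m, Eb m) n = γn n s := fun n => by
    filter_upwards [hcompat] with s hs hmem using hγ s (hs hmem) n
  refine ⟨γ, fun n => ⟨(hint n).congr_fun_ae ?_, fun t ht => ?_⟩⟩
  · exact ((ae_restrict_iff' measurableSet_Icc).2 (hγ_ae n)).mono fun s hs => hs.symm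
  · rw [hrep n t ht, intervalIntegral.integral_congr_ae ((hγ_ae n).mono fun s hs hst => hs ?_)]
    rw [uIoc_of_le ht.1] at hst
    exact ⟨hst.1.le, hst.2.trans ht.2⟩

/-- A curve into the projective limit `E = ⋂ₙ Eₙ` is absolutely continuous (i.e.,
an indefinite integral of an `L¹` curve `γ` with values in `E`) if and only if each
of its components `λₙ ∘ η : [a,b] → Eₙ` is absolutely continuous. -/
theorem absCont_into_projLim_iff
    (Eb : ℕ → Type*) [∀ n, NormedAddCommGroup (Eb n)] [∀ n, NormedSpace ℝ (Eb n)]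
    [∀ n, CompleteSpace (Eb n)]
    (ι : ∀ n, Eb (n + 1) →L[ℝ] Eb n) (hι : ∀ n, Function.Injective (ι n))
    (a b : ℝ) (hab : a < b) (η : ℝ → projLim Eb ι) :
    (∃ γ : ℝ → projLim Eb ι, ∀ n,
        IntegrableOn (fun s => ((γ s : ∀ m, Eb m) n)) (Icc a b) ∧
        ∀ t ∈ Icc a b, ((η t : ∀ m, Eb m) n) =
          ((η a : ∀ m, Eb m) n) + ∫ s in a..t, ((γ s : ∀ m, Eb m) n)) ↔
      ∀ n, ∃ γn : ℝ → Eb n, IntegrableOn γn (Icc a b) ∧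
        ∀ t ∈ Icc a b, ((η t : ∀ m, Eb m) n) =
          ((η a : ∀ m, Eb m) n) + ∫ s in a..t, γn s :=
  absCont_into_projLim_iff_general Eb ι a b η
end

section
/- Let E, Z be Banach spaces, f : B̄_R(y₀) × Z → E as in the Carathéodory existence lemma with constants L and S = sup ‖f(y,·)‖_op, and suppose L‖γ‖_{L¹} < 1, S‖γ‖_{L¹} ≤ R. Denote by η_γ the solution with η_γ(t₀) = y₀. Then the solution depends Lipschitz-continuously on the right-hand side data in the sense that for γ, γ̃ ∈ L¹([a,b],Z) both satisfying the smallness conditions, ‖η_γ − η_{γ̃}‖_∞ ≤ S‖γ − γ̃‖_{L¹} / (1 − L·max(‖γ‖_{L¹}, ‖γ̃‖_{L¹})). -/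
/-!
Let `M` be the maximum of `‖η − η'‖` on `[a, b]`. Subtracting the two integral equations and
splitting `f(η, γ) − f(η', γ') = (f(η, γ) − f(η', γ)) + f(η', γ − γ')` gives
`M ≤ L ‖γ‖₁ M + S ‖γ − γ'‖₁ ≤ q M + S ‖γ − γ'‖₁` with `q = L max(‖γ‖₁, ‖γ'‖₁) < 1`, which is the
fixed-point perturbation estimate evaluated directly at the two solutions.
-/

open Set MeasureTheory

theorem le_div_one_sub_of_forall_le_mul_add {α : Type*} [TopologicalSpace α] {K : Set α}
    (hK : IsCompact K) (hne : K.Nonempty) {d : α → ℝ} (hd : ContinuousOn d K) {q C : ℝ}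
    (hq : q < 1) (h : ∀ M, (∀ s ∈ K, d s ≤ M) → ∀ s ∈ K, d s ≤ q * M + C) :
    ∀ s ∈ K, d s ≤ C / (1 - q) := by
  obtain ⟨s₁, hs₁, hmax⟩ := hK.exists_isMaxOn hne hd
  have hself : d s₁ ≤ q * d s₁ + C := h (d s₁) (fun s hs => hmax hs) s₁ hs₁
  intro s hs
  calc d s ≤ d s₁ := hmax hs
    _ ≤ C / (1 - q) := by rw [le_div_iff₀ (by linarith)]; linarith

theorem norm_apply_sub_apply_le_of_isLinearMap {E Z F : Type*} [NormedAddCommGroup E]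
    [NormedAddCommGroup Z] [NormedSpace ℝ Z] [NormedAddCommGroup F] [NormedSpace ℝ F]
    {f : E → Z → F} {s : Set E} (hlin : ∀ y ∈ s, IsLinearMap ℝ (f y)) {L S : ℝ}
    (hLip : ∀ y₁ ∈ s, ∀ y₂ ∈ s, ∀ z : Z, ‖f y₂ z - f y₁ z‖ ≤ L * ‖y₂ - y₁‖ * ‖z‖)
    (hS : ∀ y ∈ s, ∀ z : Z, ‖f y z‖ ≤ S * ‖z‖) {y y' : E} (hy : y ∈ s) (hy' : y' ∈ s)
    (z z' : Z) : ‖f y z - f y' z'‖ ≤ L * ‖y - y'‖ * ‖z‖ + S * ‖z - z'‖ := by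
  have hsub : f y' z - f y' z' = f y' (z - z') := ((hlin y' hy').mk' _).map_sub z z' |>.symm
  calc ‖f y z - f y' z'‖ ≤ ‖f y z - f y' z‖ + ‖f y' z - f y' z'‖ :=
        norm_sub_le_norm_sub_add_norm_sub _ _ _
    _ ≤ L * ‖y - y'‖ * ‖z‖ + S * ‖z - z'‖ := by
        rw [hsub]
        exact add_le_add (hLip y' hy' y hy z) (hS y' hy' _)

theorem IsCaraSol.norm_sub_le_integral {E Z : Type*} [NormedAddCommGroup E] [NormedSpace ℝ E]
    {f : E → Z → E} {γ γ' : ℝ → Z} {a b t₀ : ℝ} {η η' : ℝ → E}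
    (hη : IsCaraSol f γ a b t₀ η) (hη' : IsCaraSol f γ' a b t₀ η') (h₀ : η t₀ = η' t₀)
    (ht₀ : t₀ ∈ Icc a b) {u : ℝ} (hu : u ∈ Icc a b) :
    ‖η u - η' u‖ ≤ ∫ s in Icc a b, ‖f (η s) (γ s) - f (η' s) (γ' s)‖ := by
  have hsub : Set.uIoc t₀ u ⊆ Icc a b := uIoc_subset_uIcc.trans (uIcc_subset_Icc ht₀ hu)
  have hdiff : η u - η' u = ∫ s in t₀..u, (f (η s) (γ s) - f (η' s) (γ' s)) := by
    rw [intervalIntegral.integral_sub (intervalIntegrable_iff.2 (hη.2.1.mono_set hsub))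
      (intervalIntegrable_iff.2 (hη'.2.1.mono_set hsub)), hη.2.2 u hu, hη'.2.2 u hu, h₀]
    abel
  rw [hdiff]
  exact intervalIntegral.norm_integral_le_integral_norm_uIoc.trans <|
    setIntegral_mono_set (hη.2.1.sub hη'.2.1).norm (.of_forall fun _ => norm_nonneg _)
      hsub.eventuallyLE

theorem IsCaraSol.norm_sub_le_of_forall_norm_sub_le {E Z : Type*} [NormedAddCommGroup E]
    [NormedSpace ℝ E] [NormedAddCommGroup Z] [NormedSpace ℝ Z] {f : E → Z → E} {U : Set E}
    (hlin : ∀ y ∈ U, IsLinearMap ℝ (f y)) {L S : ℝ}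
    (hLip : ∀ y₁ ∈ U, ∀ y₂ ∈ U, ∀ z : Z, ‖f y₂ z - f y₁ z‖ ≤ L * ‖y₂ - y₁‖ * ‖z‖)
    (hS : ∀ y ∈ U, ∀ z : Z, ‖f y z‖ ≤ S * ‖z‖) (hL : 0 ≤ L) {a b t₀ : ℝ} (ht₀ : t₀ ∈ Icc a b)
    {γ γ' : ℝ → Z} (hγ : IntegrableOn γ (Icc a b)) (hγ' : IntegrableOn γ' (Icc a b))
    {η η' : ℝ → E} (hηU : ∀ t ∈ Icc a b, η t ∈ U) (hη'U : ∀ t ∈ Icc a b, η' t ∈ U)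
    (hη : IsCaraSol f γ a b t₀ η) (hη' : IsCaraSol f γ' a b t₀ η') (h₀ : η t₀ = η' t₀)
    {M : ℝ} (hM : ∀ t ∈ Icc a b, ‖η t - η' t‖ ≤ M) {u : ℝ} (hu : u ∈ Icc a b) :
    ‖η u - η' u‖ ≤ L * M * (∫ s in Icc a b, ‖γ s‖) + S * ∫ s in Icc a b, ‖γ s - γ' s‖ := by
  have hγint : IntegrableOn (fun s => L * M * ‖γ s‖) (Icc a b) := hγ.norm.const_mul _
  have hdint : IntegrableOn (fun s => S * ‖γ s - γ' s‖) (Icc a b) :=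
    (hγ.sub hγ').norm.const_mul _
  calc ‖η u - η' u‖ ≤ ∫ s in Icc a b, ‖f (η s) (γ s) - f (η' s) (γ' s)‖ :=
        hη.norm_sub_le_integral hη' h₀ ht₀ hu
    _ ≤ ∫ s in Icc a b, (L * M * ‖γ s‖ + S * ‖γ s - γ' s‖) := by
        refine setIntegral_mono_on (hη.2.1.sub hη'.2.1).norm (hγint.add hdint)
          measurableSet_Icc fun s hs => ?_
        refine (norm_apply_sub_apply_le_of_isLinearMap hlin hLip hS (hηU s hs)
          (hη'U s hs) _ _).trans ?_
        gcongr
        exact hM s hs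
    _ = L * M * (∫ s in Icc a b, ‖γ s‖) + S * ∫ s in Icc a b, ‖γ s - γ' s‖ := by
        rw [integral_add hγint hdint, integral_const_mul, integral_const_mul]

theorem lipschitz_dependence_caratheodory_general
    {E Z : Type*} [NormedAddCommGroup E] [NormedSpace ℝ E]
    [NormedAddCommGroup Z] [NormedSpace ℝ Z]
    (y₀ : E) (R : ℝ) (f : E → Z → E)
    (hlin : ∀ y ∈ Metric.closedBall y₀ R, IsLinearMap ℝ (f y))
    (L : ℝ) (hL : 0 ≤ L)
    (hLip : ∀ y₁ ∈ Metric.closedBall y₀ R, ∀ y₂ ∈ Metric.closedBall y₀ R, ∀ z : Z,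
      ‖f y₂ z - f y₁ z‖ ≤ L * ‖y₂ - y₁‖ * ‖z‖)
    (S : ℝ) (hS : ∀ y ∈ Metric.closedBall y₀ R, ∀ z : Z, ‖f y z‖ ≤ S * ‖z‖)
    (a b : ℝ) (t₀ : ℝ) (ht₀ : t₀ ∈ Icc a b)
    (γ γ' : ℝ → Z) (hγ : IntegrableOn γ (Icc a b)) (hγ' : IntegrableOn γ' (Icc a b))
    (hsmall : L * ∫ s in Icc a b, ‖γ s‖ < 1)
    (hsmall' : L * ∫ s in Icc a b, ‖γ' s‖ < 1)
    (η η' : ℝ → E)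
    (hηball : ∀ t ∈ Icc a b, η t ∈ Metric.closedBall y₀ R)
    (hη'ball : ∀ t ∈ Icc a b, η' t ∈ Metric.closedBall y₀ R)
    (hη : IsCaraSol f γ a b t₀ η) (hη' : IsCaraSol f γ' a b t₀ η')
    (hη0 : η t₀ = y₀) (hη'0 : η' t₀ = y₀) :
    ∀ t ∈ Icc a b, ‖η t - η' t‖ ≤
      S * (∫ s in Icc a b, ‖γ s - γ' s‖) /
        (1 - L * max (∫ s in Icc a b, ‖γ s‖) (∫ s in Icc a b, ‖γ' s‖)) := by
  have hq : L * max (∫ s in Icc a b, ‖γ s‖) (∫ s in Icc a b, ‖γ' s‖) < 1 := by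
    rw [mul_max_of_nonneg _ _ hL]
    exact max_lt hsmall hsmall'
  refine le_div_one_sub_of_forall_le_mul_add isCompact_Icc ⟨t₀, ht₀⟩ (hη.1.sub hη'.1).norm hq
    fun M hM u hu => ?_
  have hM₀ : 0 ≤ M := (norm_nonneg _).trans (hM t₀ ht₀)
  calc ‖η u - η' u‖
      ≤ L * M * (∫ s in Icc a b, ‖γ s‖) + S * ∫ s in Icc a b, ‖γ s - γ' s‖ :=
        hη.norm_sub_le_of_forall_norm_sub_le hlin hLip hS hL ht₀ hγ hγ' hηball hη'ball hη'
          (hη0.trans hη'0.symm) hM hu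
    _ ≤ L * max (∫ s in Icc a b, ‖γ s‖) (∫ s in Icc a b, ‖γ' s‖) * M +
          S * ∫ s in Icc a b, ‖γ s - γ' s‖ := by
        rw [mul_right_comm]
        gcongr
        exact le_max_left _ _

/-- Lipschitz dependence of the Carathéodory solution on the right-hand side data:
for `γ, γ̃` both satisfying the smallness conditions, the corresponding solutions
`η_γ, η_γ̃` with `η(t₀) = y₀` satisfy
`‖η_γ − η_γ̃‖_∞ ≤ S ‖γ − γ̃‖_{L¹} / (1 − L max(‖γ‖_{L¹}, ‖γ̃‖_{L¹}))`. -/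
theorem lipschitz_dependence_caratheodory
    {E Z : Type*} [NormedAddCommGroup E] [NormedSpace ℝ E] [CompleteSpace E]
    [NormedAddCommGroup Z] [NormedSpace ℝ Z] [CompleteSpace Z]
    (y₀ : E) (R : ℝ) (hR : 0 < R) (f : E → Z → E)
    (hf : ContinuousOn (fun p : E × Z => f p.1 p.2) (Metric.closedBall y₀ R ×ˢ (univ : Set Z)))
    (hlin : ∀ y ∈ Metric.closedBall y₀ R, IsLinearMap ℝ (f y))
    (L : ℝ) (hL : 0 ≤ L)
    (hLip : ∀ y₁ ∈ Metric.closedBall y₀ R, ∀ y₂ ∈ Metric.closedBall y₀ R, ∀ z : Z,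
      ‖f y₂ z - f y₁ z‖ ≤ L * ‖y₂ - y₁‖ * ‖z‖)
    (S : ℝ) (hS : ∀ y ∈ Metric.closedBall y₀ R, ∀ z : Z, ‖f y z‖ ≤ S * ‖z‖)
    (a b : ℝ) (hab : a < b) (t₀ : ℝ) (ht₀ : t₀ ∈ Icc a b)
    (γ γ' : ℝ → Z) (hγ : IntegrableOn γ (Icc a b)) (hγ' : IntegrableOn γ' (Icc a b))
    (hsmall : L * ∫ s in Icc a b, ‖γ s‖ < 1)
    (hsmall' : L * ∫ s in Icc a b, ‖γ' s‖ < 1)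
    (hSR : S * ∫ s in Icc a b, ‖γ s‖ ≤ R)
    (hSR' : S * ∫ s in Icc a b, ‖γ' s‖ ≤ R)
    (η η' : ℝ → E)
    (hηball : ∀ t ∈ Icc a b, η t ∈ Metric.closedBall y₀ R)
    (hη'ball : ∀ t ∈ Icc a b, η' t ∈ Metric.closedBall y₀ R)
    (hη : IsCaraSol f γ a b t₀ η) (hη' : IsCaraSol f γ' a b t₀ η')
    (hη0 : η t₀ = y₀) (hη'0 : η' t₀ = y₀) :
    ∀ t ∈ Icc a b, ‖η t - η' t‖ ≤
      S * (∫ s in Icc a b, ‖γ s - γ' s‖) /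
        (1 - L * max (∫ s in Icc a b, ‖γ s‖) (∫ s in Icc a b, ‖γ' s‖)) :=
  lipschitz_dependence_caratheodory_general y₀ R f hlin L hL hLip S hS a b t₀ ht₀ γ γ' hγ hγ' hsmall
    hsmall' η η' hηball hη'ball hη hη' hη0 hη'0
end
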